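/- There exists a constant M > 0 such that for every continuously differentiable, compactly supported u : ℝ² → ℝ² and every continuously differentiable, compactly supported C : ℝ² → ℝ, ‖C u‖_{L²} ≤ M ‖C‖_{L²}^{1/2} ‖∇C‖_{L²}^{1/2} ‖u‖_{L²}^{1/2} ‖∇u‖_{L²}^{1/2}, where ‖C u‖_{L²}² = ∫_{ℝ²} C(x)² |u(x)|² dx. -/

import Mathlib

open MeasureTheory

/-- The `i`-th partial derivative of a scalar function on `ℝ²`. -/
noncomputable def pderiv2 (f : (Fin 2 → ℝ) → ℝ) (i : Fin 2) (x : Fin 2 → ℝ) : ℝ :=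
  fderiv ℝ f x (Pi.single i 1)

/-!
Hölder gives `∫ C² uᵢ² ≤ ‖C‖₄² ‖uᵢ‖₄²`, and Ladyzhenskaya's inequality `‖f‖₄² ≤ K ‖f‖₂ ‖∇f‖₂`
bounds both factors; summing over `i` with Cauchy–Schwarz gives the estimate with `M = K`.
Ladyzhenskaya's inequality is the Gagliardo–Nirenberg–Sobolev inequality `‖v‖₂ ≤ c ‖∇v‖₁` of
dimension two applied to `v = f²`, combined with `‖∇(f²)‖₁ = 2 ∫ |f| |∇f| ≤ 2 ‖f‖₂ ‖∇f‖₂`.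
-/

theorem HasCompactSupport.pow {α M : Type*} [TopologicalSpace α] [MonoidWithZero M] {f : α → M}
    (hf : HasCompactSupport f) {n : ℕ} (hn : n ≠ 0) : HasCompactSupport fun x => f x ^ n :=
  hf.comp_left (g := fun t : M => t ^ n) (zero_pow hn)

theorem integral_mul_le_sqrt_mul_sqrt_of_nonneg {α : Type*} [MeasurableSpace α] {μ : Measure α}
    {f g : α → ℝ} (hf_nonneg : 0 ≤ᵐ[μ] f) (hg_nonneg : 0 ≤ᵐ[μ] g) (hf : MemLp f 2 μ)
    (hg : MemLp g 2 μ) :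
    ∫ a, f a * g a ∂μ ≤ √(∫ a, f a ^ 2 ∂μ) * √(∫ a, g a ^ 2 ∂μ) := by
  have := integral_mul_le_Lp_mul_Lq_of_nonneg .two_two hf_nonneg hg_nonneg
    (by simpa using hf) (by simpa using hg)
  simpa [Real.sqrt_eq_rpow, Real.rpow_two] using this

theorem norm_fderiv_fun_sq {E : Type*} [NormedAddCommGroup E] [NormedSpace ℝ E] {f : E → ℝ}
    {x : E} (hf : DifferentiableAt ℝ f x) :
    ‖fderiv ℝ (fun y => f y ^ 2) x‖ = 2 * |f x| * ‖fderiv ℝ f x‖ := by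
  rw [fderiv_fun_pow 2 hf, norm_smul]
  simp [mul_assoc]

theorem sqrt_integral_sq_le_integral_norm_fderiv {E : Type*} [NormedAddCommGroup E]
    [NormedSpace ℝ E] [MeasurableSpace E] [BorelSpace E] [FiniteDimensional ℝ E]
    (μ : Measure E) [μ.IsAddHaarMeasure] (hE : Module.finrank ℝ E = 2) {v : E → ℝ}
    (hv : ContDiff ℝ 1 v) (h2v : HasCompactSupport v) :
    √(∫ x, v x ^ 2 ∂μ) ≤ eLpNormLESNormFDerivOneConst μ 2 * ∫ x, ‖fderiv ℝ v x‖ ∂μ := by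
  have hp : NNReal.HolderConjugate (Module.finrank ℝ E) 2 := by
    rw [hE]; exact_mod_cast NNReal.HolderConjugate.two_two
  have sobolev := eLpNorm_le_eLpNorm_fderiv_one μ hv h2v hp
  have hv2 : MemLp v 2 μ := hv.continuous.memLp_of_hasCompactSupport h2v
  have hDv : Integrable (fderiv ℝ v) μ :=
    (hv.continuous_fderiv one_ne_zero).integrable_of_hasCompactSupport (h2v.fderiv ℝ)
  rw [ENNReal.coe_ofNat, NNReal.coe_ofNat,
    hv2.eLpNorm_eq_integral_rpow_norm two_ne_zero ENNReal.ofNat_ne_top,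
    eLpNorm_one_eq_lintegral_enorm, ← ofReal_integral_norm_eq_lintegral_enorm hDv,
    ← ENNReal.ofReal_coe_nnreal, ← ENNReal.ofReal_mul (by positivity),
    ENNReal.ofReal_le_ofReal_iff (by positivity)] at sobolev
  simpa [Real.sqrt_eq_rpow, Real.rpow_two] using sobolev

theorem ContinuousLinearMap.norm_sq_le_card_mul_sum_sq_apply_single {n : ℕ}
    (L : (Fin n → ℝ) →L[ℝ] ℝ) : ‖L‖ ^ 2 ≤ n * ∑ i, L (Pi.single i 1) ^ 2 := by
  -- the sup norm on `Fin n → ℝ` makes `‖L‖` the ℓ¹ norm of the `L eᵢ`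
  have hL : ‖L‖ ≤ ∑ i, |L (Pi.single i 1)| := by
    refine L.opNorm_le_bound (by positivity) fun y => ?_
    calc ‖L y‖ = |∑ i, y i * L (Pi.single i 1)| := by
          conv_lhs => rw [← Finset.univ_sum_single y]
          simp only [map_sum, Real.norm_eq_abs, ← smul_eq_mul, ← map_smul, ← Pi.single_smul]
          simp
      _ ≤ ∑ i, |y i| * |L (Pi.single i 1)| :=
          (Finset.abs_sum_le_sum_abs _ _).trans_eq (by simp only [abs_mul])
      _ ≤ ∑ i, ‖y‖ * |L (Pi.single i 1)| := by
          gcongr with i; exact norm_le_pi_norm y i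
      _ = (∑ i, |L (Pi.single i 1)|) * ‖y‖ := by rw [← Finset.mul_sum, mul_comm]
  calc ‖L‖ ^ 2 ≤ (∑ i, |L (Pi.single i 1)|) ^ 2 := by gcongr
    _ ≤ n * ∑ i, |L (Pi.single i 1)| ^ 2 :=
        sq_sum_le_card_mul_sum_sq.trans_eq (by simp)
    _ = n * ∑ i, L (Pi.single i 1) ^ 2 := by simp only [sq_abs]

theorem ContDiff.continuous_pderiv2 {f : (Fin 2 → ℝ) → ℝ} (hf : ContDiff ℝ 1 f) (i : Fin 2) :
    Continuous (pderiv2 f i) :=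
  (hf.continuous_fderiv one_ne_zero).clm_apply continuous_const

theorem HasCompactSupport.pderiv2 {f : (Fin 2 → ℝ) → ℝ} (hf : HasCompactSupport f) (i : Fin 2) :
    HasCompactSupport (_root_.pderiv2 f i) :=
  (hf.fderiv ℝ).comp_left (g := fun L : (Fin 2 → ℝ) →L[ℝ] ℝ => L (Pi.single i 1)) rfl

theorem integrable_sum_sq_pderiv2 {f : (Fin 2 → ℝ) → ℝ} (hf : ContDiff ℝ 1 f)
    (h2f : HasCompactSupport f) : Integrable (fun x => ∑ i, pderiv2 f i x ^ 2) :=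
  integrable_finsetSum _ fun i _ =>
    ((hf.continuous_pderiv2 i).pow 2).integrable_of_hasCompactSupport
      ((h2f.pderiv2 i).pow two_ne_zero)

theorem sq_norm_fderiv_le_two_mul_sum_sq_pderiv2 {f : (Fin 2 → ℝ) → ℝ} {x : Fin 2 → ℝ} :
    ‖fderiv ℝ f x‖ ^ 2 ≤ 2 * ∑ i, pderiv2 f i x ^ 2 := by
  simpa [pderiv2] using (fderiv ℝ f x).norm_sq_le_card_mul_sum_sq_apply_single

theorem ladyzhenskaya_inequality : ∃ K > 0, ∀ f : (Fin 2 → ℝ) → ℝ,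
    ContDiff ℝ 1 f → HasCompactSupport f →
    √(∫ x, f x ^ 4) ≤ K * √(∫ x, f x ^ 2) * √(∫ x, ∑ i, pderiv2 f i x ^ 2) := by
  set c : ℝ := ↑(eLpNormLESNormFDerivOneConst (volume : Measure (Fin 2 → ℝ)) 2)
  refine ⟨2 * √2 * c + 1, by positivity, fun f hf h2f => ?_⟩
  have hf_abs : MemLp (fun x => |f x|) 2 :=
    hf.continuous.abs.memLp_of_hasCompactSupport h2f.abs
  have hDf : MemLp (fun x => ‖fderiv ℝ f x‖) 2 :=
    (hf.continuous_fderiv one_ne_zero).norm.memLp_of_hasCompactSupport (h2f.fderiv ℝ).norm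
  have hDf_sq : ∫ x, ‖fderiv ℝ f x‖ ^ 2 ≤ 2 * ∫ x, ∑ i, pderiv2 f i x ^ 2 := by
    rw [← integral_const_mul]
    exact integral_mono hDf.integrable_sq ((integrable_sum_sq_pderiv2 hf h2f).const_mul 2)
      fun x => sq_norm_fderiv_le_two_mul_sum_sq_pderiv2
  calc √(∫ x, f x ^ 4) = √(∫ x, (f x ^ 2) ^ 2) := by simp_rw [← pow_mul]
    _ ≤ c * ∫ x, ‖fderiv ℝ (fun y => f y ^ 2) x‖ :=
        sqrt_integral_sq_le_integral_norm_fderiv volume (by simp) (hf.pow 2)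
          (h2f.pow two_ne_zero)
    _ = c * (2 * ∫ x, |f x| * ‖fderiv ℝ f x‖) := by
        simp_rw [← integral_const_mul, norm_fderiv_fun_sq (hf.differentiable one_ne_zero _),
          mul_assoc]
    _ ≤ c * (2 * (√(∫ x, |f x| ^ 2) * √(∫ x, ‖fderiv ℝ f x‖ ^ 2))) := by
        gcongr
        exact integral_mul_le_sqrt_mul_sqrt_of_nonneg (.of_forall fun x => abs_nonneg _)
          (.of_forall fun x => norm_nonneg _) hf_abs hDf
    _ ≤ c * (2 * (√(∫ x, f x ^ 2) * √(2 * ∫ x, ∑ i, pderiv2 f i x ^ 2))) := by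
        simp_rw [sq_abs]
        gcongr
    _ = 2 * √2 * c * √(∫ x, f x ^ 2) * √(∫ x, ∑ i, pderiv2 f i x ^ 2) := by
        rw [Real.sqrt_mul zero_le_two]
        ring
    _ ≤ (2 * √2 * c + 1) * √(∫ x, f x ^ 2) * √(∫ x, ∑ i, pderiv2 f i x ^ 2) := by
        gcongr
        linarith

theorem exists_integral_sq_mul_sq_le : ∃ K > 0, ∀ f g : (Fin 2 → ℝ) → ℝ,
    ContDiff ℝ 1 f → HasCompactSupport f → ContDiff ℝ 1 g → HasCompactSupport g →
    ∫ x, f x ^ 2 * g x ^ 2 ≤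
      K ^ 2 * (√(∫ x, f x ^ 2) * √(∫ x, ∑ i, pderiv2 f i x ^ 2)) *
        (√(∫ x, g x ^ 2) * √(∫ x, ∑ i, pderiv2 g i x ^ 2)) := by
  obtain ⟨K, hK, hlad⟩ := ladyzhenskaya_inequality
  refine ⟨K, hK, fun f g hf h2f hg h2g => ?_⟩
  have hsq {h : (Fin 2 → ℝ) → ℝ} (hh : ContDiff ℝ 1 h) (h2h : HasCompactSupport h) :
      MemLp (fun x => h x ^ 2) 2 :=
    (hh.continuous.pow 2).memLp_of_hasCompactSupport (h2h.pow two_ne_zero)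
  calc ∫ x, f x ^ 2 * g x ^ 2 ≤ √(∫ x, (f x ^ 2) ^ 2) * √(∫ x, (g x ^ 2) ^ 2) :=
        integral_mul_le_sqrt_mul_sqrt_of_nonneg (.of_forall fun x => sq_nonneg _)
          (.of_forall fun x => sq_nonneg _) (hsq hf h2f) (hsq hg h2g)
    _ = √(∫ x, f x ^ 4) * √(∫ x, g x ^ 4) := by simp_rw [← pow_mul]
    _ ≤ (K * √(∫ x, f x ^ 2) * √(∫ x, ∑ i, pderiv2 f i x ^ 2)) *
          (K * √(∫ x, g x ^ 2) * √(∫ x, ∑ i, pderiv2 g i x ^ 2)) := by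
        gcongr
        exacts [hlad f hf h2f, hlad g hg h2g]
    _ = _ := by ring

theorem rpow_half_le_of_le_sq_mul_sqrt {T K a b c d : ℝ} (hK : 0 ≤ K) (ha : 0 ≤ a)
    (hb : 0 ≤ b) (hc : 0 ≤ c) (hd : 0 ≤ d) (h : T ≤ K ^ 2 * (√a * √b) * (√c * √d)) :
    T ^ (1 / 2 : ℝ) ≤
      K * a ^ (1 / 4 : ℝ) * b ^ (1 / 4 : ℝ) * c ^ (1 / 4 : ℝ) * d ^ (1 / 4 : ℝ) := by
  have quarter {x : ℝ} (hx : 0 ≤ x) : x ^ (1 / 4 : ℝ) = √√x := by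
    rw [Real.sqrt_eq_rpow, Real.sqrt_eq_rpow, ← Real.rpow_mul hx]
    norm_num
  rw [← Real.sqrt_eq_rpow, quarter ha, quarter hb, quarter hc, quarter hd, Real.sqrt_le_iff]
  refine ⟨by positivity, h.trans_eq ?_⟩
  simp only [mul_pow, Real.sq_sqrt, Real.sqrt_nonneg]
  ring

/-- Estimate of the product `C u` in `L²` (Lemma 4.4 of the paper):
`‖C u‖_{L²} ≤ M ‖C‖^{1/2} ‖∇C‖^{1/2} ‖u‖^{1/2} ‖∇u‖^{1/2}`. -/
theorem product_Cu_L2_estimate :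
    ∃ M : ℝ, 0 < M ∧
      ∀ (u : (Fin 2 → ℝ) → (Fin 2 → ℝ)) (C : (Fin 2 → ℝ) → ℝ),
        ContDiff ℝ 1 u → HasCompactSupport u →
        ContDiff ℝ 1 C → HasCompactSupport C →
        (∫ x, (C x) ^ 2 * ∑ i, (u x i) ^ 2) ^ ((1 : ℝ) / 2) ≤
          M * (∫ x, (C x) ^ 2) ^ ((1 : ℝ) / 4) *
            (∫ x, ∑ i, (pderiv2 C i x) ^ 2) ^ ((1 : ℝ) / 4) *
            (∫ x, ∑ i, (u x i) ^ 2) ^ ((1 : ℝ) / 4) *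
            (∫ x, ∑ i, ∑ j, (pderiv2 (fun y => u y i) j x) ^ 2) ^ ((1 : ℝ) / 4) := by
  obtain ⟨K, hK, hprod⟩ := exists_integral_sq_mul_sq_le
  refine ⟨K, hK, fun u C hu h2u hC h2C => ?_⟩
  have hu_i (i : Fin 2) : ContDiff ℝ 1 fun x => u x i := contDiff_pi.mp hu i
  have h2u_i (i : Fin 2) : HasCompactSupport fun x => u x i :=
    h2u.comp_left (g := fun v : Fin 2 → ℝ => v i) rfl
  set a : Fin 2 → ℝ := fun i => ∫ x, u x i ^ 2
  set b : Fin 2 → ℝ := fun i => ∫ x, ∑ j, pderiv2 (fun y => u y i) j x ^ 2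
  have hsum_a : ∫ x, ∑ i, u x i ^ 2 = ∑ i, a i :=
    integral_finsetSum _ fun i _ =>
      ((hu_i i).continuous.pow 2).integrable_of_hasCompactSupport ((h2u_i i).pow two_ne_zero)
  have hsum_b : ∫ x, ∑ i, ∑ j, pderiv2 (fun y => u y i) j x ^ 2 = ∑ i, b i :=
    integral_finsetSum _ fun i _ => integrable_sum_sq_pderiv2 (hu_i i) (h2u_i i)
  refine rpow_half_le_of_le_sq_mul_sqrt hK.le (integral_nonneg fun x => sq_nonneg _)
    (integral_nonneg fun x => by positivity) (integral_nonneg fun x => by positivity)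
    (integral_nonneg fun x => by positivity) ?_
  rw [hsum_a, hsum_b]
  calc ∫ x, C x ^ 2 * ∑ i, u x i ^ 2 = ∑ i, ∫ x, C x ^ 2 * u x i ^ 2 := by
        simp_rw [Finset.mul_sum]
        exact integral_finsetSum _ fun i _ =>
          ((hC.continuous.pow 2).mul ((hu_i i).continuous.pow 2)).integrable_of_hasCompactSupport
            (h2C.pow two_ne_zero).mul_right
    _ ≤ ∑ i, K ^ 2 * (√(∫ x, C x ^ 2) * √(∫ x, ∑ j, pderiv2 C j x ^ 2)) *
          (√(a i) * √(b i)) :=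
        Finset.sum_le_sum fun i _ => hprod C _ hC h2C (hu_i i) (h2u_i i)
    _ ≤ _ := by
        rw [← Finset.mul_sum]
        gcongr
        exact Real.sum_sqrt_mul_sqrt_le _ (fun i => integral_nonneg fun x => sq_nonneg _)
          fun i => integral_nonneg fun x => by positivity
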